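/- Let G be a forest with distant edge {n-1,n} where n is a distant leaf, let G_2 be the induced subgraph on V(G)\{n-1,n} and G_3 the induced subgraph on V(G)\{n-2,n-1,n} (where n-2 is the unique non-leaf neighbor of n-1, if any). Then for 1 ≤ k ≤ ν(G): aim(G,k) = max{ aim(G_1,k), aim(G_2,k-1)+1, aim(G_3,k)+1 }, where G_1 is the induced subgraph on V(G)\{n}. -/

import Mathlib

open scoped Classical

noncomputable section

/-- `M` is a matching of `G`: a set of edges of `G` that are pairwise vertex-disjoint. -/
def IsMatchingSet {V : Type*} (G : SimpleGraph V) (M : Finset (Sym2 V)) : Prop :=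
  (∀ e ∈ M, e ∈ G.edgeSet) ∧
    ∀ e ∈ M, ∀ f ∈ M, e ≠ f → ∀ v : V, v ∈ e → v ∉ f

/-- The matching number `ν(G)`: the maximum size of a matching of `G`. -/
def matchingNumber {V : Type*} [Fintype V] (G : SimpleGraph V) : ℕ :=
  sSup {k | ∃ M : Finset (Sym2 V), IsMatchingSet G M ∧ M.card = k}

/-- Two edges `e, f` form a gap in `G`: they are vertex-disjoint and no edge of `G`
joins an endpoint of `e` to an endpoint of `f` (an induced matching of size 2). -/
def IsGap {V : Type*} (G : SimpleGraph V) (e f : Sym2 V) : Prop :=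
  (∀ v : V, v ∈ e → v ∉ f) ∧ ∀ u v : V, u ∈ e → v ∈ f → ¬ G.Adj u v

/-- The set of vertices covered by a set of edges `M`. -/
def matchVerts {V : Type*} (M : Finset (Sym2 V)) : Set V := {v | ∃ e ∈ M, v ∈ e}

/-- `M` is a `k`-admissible matching of `G`: a matching admitting a partition into
nonempty parts `M₁, …, M_r` such that edges from distinct parts form gaps in `G`,
`|M₁| + ⋯ + |M_r| ≤ r + k - 1`, and the induced subgraph on the vertices of each
part is a forest. -/
def IsAdmissibleMatching {V : Type*} (G : SimpleGraph V) (k : ℕ)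
    (M : Finset (Sym2 V)) : Prop :=
  IsMatchingSet G M ∧
    ∃ P : Finset (Finset (Sym2 V)),
      (∀ p ∈ P, p.Nonempty) ∧
      (∀ p ∈ P, ∀ q ∈ P, p ≠ q → Disjoint p q) ∧
      P.biUnion id = M ∧
      (∀ p ∈ P, ∀ q ∈ P, p ≠ q → ∀ e ∈ p, ∀ f ∈ q, IsGap G e f) ∧
      M.card + 1 ≤ P.card + k ∧
      ∀ p ∈ P, (SimpleGraph.induce (matchVerts p) G).IsAcyclic

/-- The `k`-admissible matching number `aim(G,k)`: the maximum size of a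
`k`-admissible matching of `G` (`0` if none exists). -/
def aim {V : Type*} [Fintype V] (G : SimpleGraph V) (k : ℕ) : ℕ :=
  sSup {m | ∃ M : Finset (Sym2 V), IsAdmissibleMatching G k M ∧ M.card = m}


/-- The graph obtained from `G` by deleting the vertices in `s` (keeping the same
vertex type; deleted vertices become isolated). -/
def delV {V : Type*} (G : SimpleGraph V) (s : Set V) : SimpleGraph V where
  Adj u v := G.Adj u v ∧ u ∉ s ∧ v ∉ s
  symm := ⟨fun u v h => ⟨h.1.symm, h.2.2, h.2.1⟩⟩
  loopless := ⟨fun v h => G.loopless.irrefl v h.1⟩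


/-! The edge `e = {n-1, n}` at the distant leaf `n` forms a gap with every edge avoiding
`n-2`, `n-1` and `n`: the only other neighbours of its endpoints are `n-2` and the leaves `i_j`,
whose edges all pass through `n-1`.

Take a maximum `k`-admissible matching `M` of `G`. If `e ∉ M`, then `M` lives in `G₁`. If `e`
is a part on its own, no other edge of `M` meets `n-2` (it would not form a gap with `e`), and
dropping that part leaves a `k`-admissible matching of `G₃`. Otherwise the part of `e` has
further edges, which forces `k ≥ 2`, and removing `e` from it leaves a `(k-1)`-admissible
matching of `G₂`. Conversely, `e` can be added to a `k`-admissible matching of `G₃` as a new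
part, and to a `(k-1)`-admissible matching of `G₂` as a new part or, if some edge meets `n-2`,
inside the part of that edge. -/

open Finset

section

variable {V : Type*} {G : SimpleGraph V} {k : ℕ} {M : Finset (Sym2 V)} {e : Sym2 V}

theorem IsGap.symm {f : Sym2 V} (h : IsGap G e f) : IsGap G f e :=
  ⟨fun v hvf hve => h.1 v hve hvf, fun u v hu hv huv => h.2 v u hv hu huv.symm⟩

theorem IsGap.ne {f : Sym2 V} (h : IsGap G e f) : e ≠ f := by
  rintro rfl
  exact h.1 _ e.out_fst_mem e.out_fst_mem

theorem IsMatchingSet.mono {N : Finset (Sym2 V)} (hN : IsMatchingSet G N) (h : M ⊆ N) :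
    IsMatchingSet G M :=
  ⟨fun f hf => hN.1 f (h hf), fun f hf g hg => hN.2 f (h hf) g (h hg)⟩

theorem IsMatchingSet.insert (hM : IsMatchingSet G M) (he : e ∈ G.edgeSet)
    (hdisj : ∀ f ∈ M, ∀ v ∈ e, v ∉ f) : IsMatchingSet G (insert e M) := by
  refine ⟨fun f hf => ?_, fun f hf g hg hfg v hvf => ?_⟩
  · rcases mem_insert.1 hf with rfl | hfM
    exacts [he, hM.1 f hfM]
  · rcases mem_insert.1 hf with rfl | hfM <;> rcases mem_insert.1 hg with rfl | hgM
    · exact absurd rfl hfg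
    · exact hdisj g hgM v hvf
    · exact fun hv => hdisj f hfM v hv hvf
    · exact hM.2 f hfM g hgM hfg v hvf

/-- In a forest this is all that `IsAdmissibleMatching` asks of a partition besides the
counting condition: the parts are disjoint by the gap condition and induce forests. -/
structure IsGapPartition (G : SimpleGraph V) (P : Finset (Finset (Sym2 V))) : Prop where
  nonempty : ∀ p ∈ P, p.Nonempty
  isGap : ∀ p ∈ P, ∀ q ∈ P, p ≠ q → ∀ e ∈ p, ∀ f ∈ q, IsGap G e f

namespace IsGapPartition

variable {P Q : Finset (Finset (Sym2 V))} {p q : Finset (Sym2 V)}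

theorem disjoint (hP : IsGapPartition G P) (hp : p ∈ P) (hq : q ∈ P) (hpq : p ≠ q) :
    Disjoint p q :=
  Finset.disjoint_left.2 fun f hfp hfq => (hP.isGap p hp q hq hpq f hfp f hfq).ne rfl

theorem card_le (hP : IsGapPartition G P) : P.card ≤ (P.biUnion id).card :=
  card_le_card_biUnion (fun _ hp _ hq hpq => hP.disjoint hp hq hpq) hP.nonempty

theorem mono (hP : IsGapPartition G P) (h : Q ⊆ P) : IsGapPartition G Q :=
  ⟨fun p hp => hP.nonempty p (h hp), fun p hp q hq => hP.isGap p (h hp) q (h hq)⟩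

theorem insert_of_isGap (hP : IsGapPartition G P) (hq : q.Nonempty)
    (hgap : ∀ r ∈ P, r ≠ q → ∀ e ∈ q, ∀ f ∈ r, IsGap G e f) :
    IsGapPartition G (insert q P) := by
  refine ⟨fun p hp => ?_, fun p hp r hr hpr => ?_⟩
  · rcases mem_insert.1 hp with rfl | hpP
    exacts [hq, hP.nonempty p hpP]
  · rcases mem_insert.1 hp with rfl | hpP <;> rcases mem_insert.1 hr with rfl | hrP
    · exact absurd rfl hpr
    · exact hgap r hrP hpr.symm
    · exact fun e he f hf => (hgap p hpP hpr f hf e he).symm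
    · exact hP.isGap p hpP r hrP hpr

theorem biUnion_erase (hP : IsGapPartition G P) (hp : p ∈ P) :
    (P.erase p).biUnion id = P.biUnion id \ p := by
  ext f
  simp only [mem_biUnion, mem_erase, mem_sdiff, id]
  constructor
  · rintro ⟨r, ⟨hrp, hr⟩, hfr⟩
    exact ⟨⟨r, hr, hfr⟩, Finset.disjoint_left.1 (hP.disjoint hr hp hrp) hfr⟩
  · rintro ⟨⟨r, hr, hfr⟩, hfp⟩
    exact ⟨r, ⟨by rintro rfl; exact hfp hfr, hr⟩, hfr⟩

theorem erase_of_mem {e : Sym2 V} (hP : IsGapPartition G P) (hp : p ∈ P) (hep : e ∈ p)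
    (hpe : p ≠ {e}) :
    IsGapPartition G (insert (p.erase e) (P.erase p)) ∧
      (insert (p.erase e) (P.erase p)).biUnion id = (P.biUnion id).erase e ∧
      (insert (p.erase e) (P.erase p)).card = P.card := by
  have hq : (p.erase e).Nonempty :=
    (erase_nonempty hep).2 ((nontrivial_iff_ne_singleton hep).2 hpe)
  have hnew : p.erase e ∉ P.erase p := fun h =>
    have ⟨hne, hmem⟩ := mem_erase.1 h
    hq.ne_empty ((Finset.disjoint_self_iff_empty _).1 ((hP.disjoint hmem hp hne).mono_right
      (erase_subset e p)))
  refine ⟨(hP.mono (erase_subset p P)).insert_of_isGap hq fun r hr _ e' he' f hf =>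
    hP.isGap p hp r (mem_of_mem_erase hr) (ne_of_mem_erase hr).symm e'
      (mem_of_mem_erase he') f hf, ?_, ?_⟩
  · rw [biUnion_insert, hP.biUnion_erase hp]
    have := subset_biUnion_of_mem id hp
    grind
  · rw [card_insert_of_notMem hnew, card_erase_add_one hp]

end IsGapPartition

theorem isAdmissibleMatching_iff (hG : G.IsAcyclic) :
    IsAdmissibleMatching G k M ↔ IsMatchingSet G M ∧
      ∃ P, IsGapPartition G P ∧ P.biUnion id = M ∧ M.card + 1 ≤ P.card + k := by
  constructor
  · rintro ⟨hM, P, hne, -, hPM, hgap, hk, -⟩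
    exact ⟨hM, P, ⟨hne, hgap⟩, hPM, hk⟩
  · rintro ⟨hM, P, hP, hPM, hk⟩
    exact ⟨hM, P, hP.nonempty, fun p hp q hq => hP.disjoint hp hq, hPM, hP.isGap, hk,
      fun p _ => hG.induce _⟩

namespace IsAdmissibleMatching

theorem empty (hk : 1 ≤ k) : IsAdmissibleMatching G k ∅ :=
  ⟨⟨by simp, by simp⟩, ∅, by simp, by simp, by simp, by simp, by simpa using hk, by simp⟩

theorem mono {k' : ℕ} (h : IsAdmissibleMatching G k M) (hk : k ≤ k') :
    IsAdmissibleMatching G k' M := by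
  obtain ⟨hM, P, h₁, h₂, h₃, h₄, h₅, h₆⟩ := h
  exact ⟨hM, P, h₁, h₂, h₃, h₄, by omega, h₆⟩

theorem insert_of_isGap (hG : G.IsAcyclic) (hM : IsAdmissibleMatching G k M)
    (he : e ∈ G.edgeSet) (hgap : ∀ f ∈ M, IsGap G e f) :
    IsAdmissibleMatching G k (insert e M) := by
  obtain ⟨hMm, P, hP, rfl, hk⟩ := (isAdmissibleMatching_iff hG).1 hM
  have heM : e ∉ P.biUnion id := fun h => (hgap e h).ne rfl
  have hnew : {e} ∉ P := fun h => heM (mem_biUnion.2 ⟨_, h, mem_singleton_self e⟩)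
  refine (isAdmissibleMatching_iff hG).2
    ⟨hMm.insert he fun f hf => (hgap f hf).1, insert {e} P, ?_, ?_, ?_⟩
  · refine hP.insert_of_isGap (singleton_nonempty e) fun r hr _ e' he' f hf => ?_
    rw [mem_singleton.1 he']
    exact hgap f (mem_biUnion.2 ⟨r, hr, hf⟩)
  · rw [biUnion_insert, id, ← insert_eq]
  · rw [card_insert_of_notMem heM, card_insert_of_notMem hnew]
    omega

theorem insert_of_isGap_of_ne (hG : G.IsAcyclic) (hM : IsAdmissibleMatching G k M)
    (he : e ∈ G.edgeSet) {f₀ : Sym2 V} (hf₀ : f₀ ∈ M) (hdisj : ∀ f ∈ M, ∀ v ∈ e, v ∉ f)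
    (hgap : ∀ f ∈ M, f ≠ f₀ → IsGap G e f) :
    IsAdmissibleMatching G (k + 1) (insert e M) := by
  obtain ⟨hMm, P, hP, rfl, hk⟩ := (isAdmissibleMatching_iff hG).1 hM
  obtain ⟨p, hp, hf₀p⟩ := mem_biUnion.1 hf₀
  have heM : e ∉ P.biUnion id := fun h => hdisj e h _ e.out_fst_mem e.out_fst_mem
  have hnew : insert e p ∉ P.erase p := fun h =>
    heM (mem_biUnion.2 ⟨_, mem_of_mem_erase h, mem_insert_self e p⟩)
  refine (isAdmissibleMatching_iff hG).2
    ⟨hMm.insert he hdisj, insert (insert e p) (P.erase p), ?_, ?_, ?_⟩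
  · refine (hP.mono (erase_subset p P)).insert_of_isGap (insert_nonempty e p)
      fun r hr _ e' he' f hf => ?_
    obtain ⟨hrp, hr⟩ := mem_erase.1 hr
    rcases mem_insert.1 he' with rfl | he'
    · refine hgap f (mem_biUnion.2 ⟨r, hr, hf⟩) ?_
      rintro rfl
      exact Finset.disjoint_left.1 (hP.disjoint hr hp hrp) hf hf₀p
    · exact hP.isGap p hp r hr (Ne.symm hrp) e' he' f hf
  · rw [biUnion_insert, hP.biUnion_erase hp, id, insert_union]
    exact congrArg _ (union_sdiff_of_subset (subset_biUnion_of_mem id hp))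
  · rw [card_insert_of_notMem heM, card_insert_of_notMem hnew, card_erase_of_mem hp]
    have := card_pos.2 ⟨p, hp⟩
    omega

theorem erase (hG : G.IsAcyclic) (hM : IsAdmissibleMatching G k M) (he : e ∈ M) :
    (IsAdmissibleMatching G k (M.erase e) ∧ ∀ f ∈ M, f ≠ e → IsGap G e f) ∨
      (2 ≤ k ∧ IsAdmissibleMatching G (k - 1) (M.erase e)) := by
  obtain ⟨hMm, P, hP, rfl, hk⟩ := (isAdmissibleMatching_iff hG).1 hM
  obtain ⟨p, hp, hep⟩ := mem_biUnion.1 he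
  have hMm' := hMm.mono (erase_subset e _)
  have hcardM := card_erase_add_one he
  by_cases hpe : p = {e}
  · subst hpe
    have hcardP := card_erase_add_one hp
    refine Or.inl ⟨(isAdmissibleMatching_iff hG).2
      ⟨hMm', P.erase {e}, hP.mono (erase_subset _ _), ?_, by omega⟩, fun f hf hfe => ?_⟩
    · rw [hP.biUnion_erase hp, sdiff_singleton_eq_erase]
    · obtain ⟨r, hr, hfr⟩ := mem_biUnion.1 hf
      refine hP.isGap _ hp r hr ?_ e (mem_singleton_self e) f hfr
      rintro rfl
      exact hfe (mem_singleton.1 hfr)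
  · obtain ⟨hP', hPM', hcard⟩ := hP.erase_of_mem hp hep hpe
    -- the new partition of `M.erase e` still has `P.card` parts, so `P.card < M.card`
    have hle := hP'.card_le
    rw [hPM'] at hle
    exact Or.inr ⟨by omega, (isAdmissibleMatching_iff hG).2 ⟨hMm', _, hP', hPM', by omega⟩⟩

end IsAdmissibleMatching

theorem delV_le (G : SimpleGraph V) (s : Set V) : delV G s ≤ G := fun _ _ h => h.1

theorem mem_edgeSet_delV {s : Set V} :
    e ∈ (delV G s).edgeSet ↔ e ∈ G.edgeSet ∧ ∀ v ∈ e, v ∉ s := by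
  induction e using Sym2.ind with
  | _ a b => simp [delV]

theorem isMatchingSet_delV_iff {s : Set V} :
    IsMatchingSet (delV G s) M ↔ IsMatchingSet G M ∧ ∀ e ∈ M, ∀ v ∈ e, v ∉ s := by
  simp only [IsMatchingSet, mem_edgeSet_delV]
  grind

theorem isGap_delV_iff {s : Set V} {f : Sym2 V} (he : ∀ v ∈ e, v ∉ s) (hf : ∀ v ∈ f, v ∉ s) :
    IsGap (delV G s) e f ↔ IsGap G e f :=
  ⟨fun h => ⟨h.1, fun u v hu hv huv => h.2 u v hu hv ⟨huv, he u hu, hf v hv⟩⟩,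
    fun h => ⟨h.1, fun u v hu hv huv => h.2 u v hu hv huv.1⟩⟩

theorem isGapPartition_delV_iff {s : Set V} {P : Finset (Finset (Sym2 V))}
    (hs : ∀ e ∈ P.biUnion id, ∀ v ∈ e, v ∉ s) :
    IsGapPartition (delV G s) P ↔ IsGapPartition G P := by
  have key : ∀ p ∈ P, ∀ q ∈ P, ∀ e ∈ p, ∀ f ∈ q, (IsGap (delV G s) e f ↔ IsGap G e f) :=
    fun p hp q hq e he f hf =>
      isGap_delV_iff (hs e (mem_biUnion.2 ⟨p, hp, he⟩)) (hs f (mem_biUnion.2 ⟨q, hq, hf⟩))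
  constructor <;> rintro ⟨hne, hgap⟩ <;> refine ⟨hne, fun p hp q hq hpq e he f hf => ?_⟩
  exacts [(key p hp q hq e he f hf).1 (hgap p hp q hq hpq e he f hf),
    (key p hp q hq e he f hf).2 (hgap p hp q hq hpq e he f hf)]

theorem isAdmissibleMatching_delV_iff (hG : G.IsAcyclic) {s : Set V} :
    IsAdmissibleMatching (delV G s) k M ↔
      IsAdmissibleMatching G k M ∧ ∀ e ∈ M, ∀ v ∈ e, v ∉ s := by
  rw [isAdmissibleMatching_iff hG, isAdmissibleMatching_iff (hG.anti (delV_le G s)),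
    isMatchingSet_delV_iff]
  constructor
  · rintro ⟨⟨hM, hs⟩, P, hP, rfl, hk⟩
    exact ⟨⟨hM, P, (isGapPartition_delV_iff hs).1 hP, rfl, hk⟩, hs⟩
  · rintro ⟨⟨hM, P, hP, rfl, hk⟩, hs⟩
    exact ⟨⟨hM, hs⟩, P, (isGapPartition_delV_iff hs).2 hP, rfl, hk⟩

section Aim

variable [Fintype V]

theorem bddAbove_card_isAdmissibleMatching (G : SimpleGraph V) (k : ℕ) :
    BddAbove {m | ∃ M : Finset (Sym2 V), IsAdmissibleMatching G k M ∧ M.card = m} :=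
  ⟨Fintype.card (Sym2 V), by rintro _ ⟨M, -, rfl⟩; exact card_le_univ M⟩

theorem IsAdmissibleMatching.card_le_aim (h : IsAdmissibleMatching G k M) : M.card ≤ aim G k :=
  le_csSup (bddAbove_card_isAdmissibleMatching G k) ⟨M, h, rfl⟩

theorem exists_card_eq_aim (G : SimpleGraph V) (hk : 1 ≤ k) :
    ∃ M : Finset (Sym2 V), IsAdmissibleMatching G k M ∧ M.card = aim G k :=
  Nat.sSup_mem (s := {m | ∃ M : Finset (Sym2 V), IsAdmissibleMatching G k M ∧ M.card = m})
    ⟨0, ∅, .empty hk, card_empty⟩ (bddAbove_card_isAdmissibleMatching G k)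

theorem aim_delV_le (hG : G.IsAcyclic) (s : Set V) (k : ℕ) : aim (delV G s) k ≤ aim G k :=
  csSup_le_csSup' (bddAbove_card_isAdmissibleMatching G k)
    fun _ ⟨M, hM, hMc⟩ => ⟨M, ((isAdmissibleMatching_delV_iff hG).1 hM).1, hMc⟩

end Aim

section DistantLeaf

variable {x w u : V}

theorem eq_of_mem_edgeSet_of_forall_adj_eq (hx : ∀ z, G.Adj x z → z = w)
    (he : e ∈ G.edgeSet) (hxe : x ∈ e) : e = s(x, w) := by
  have hadj : G.Adj x (Sym2.Mem.other hxe) := by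
    rwa [← SimpleGraph.mem_edgeSet, Sym2.other_spec hxe]
  rw [← Sym2.other_spec hxe, hx _ hadj]

theorem isGap_of_forall_adj_eq (hx : ∀ z, G.Adj x z → z = w)
    (hw : ∀ z, G.Adj w z → z ≠ u → ∀ y, G.Adj z y → y = w) {f : Sym2 V} (hf : f ∈ G.edgeSet)
    (hxf : x ∉ f) (hwf : w ∉ f) (huf : u ∉ f) : IsGap G s(x, w) f := by
  refine ⟨fun v hv hvf => ?_, fun a b ha hb hab => ?_⟩
  · rcases Sym2.mem_iff.1 hv with rfl | rfl
    exacts [hxf hvf, hwf hvf]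
  · have hbb' : G.Adj b (Sym2.Mem.other hb) := by
      rwa [← SimpleGraph.mem_edgeSet, Sym2.other_spec hb]
    rcases Sym2.mem_iff.1 ha with rfl | rfl
    · exact hwf (hx b hab ▸ hb)
    · exact hwf (hw b hab (fun h => huf (h ▸ hb)) _ hbb' ▸ Sym2.other_mem hb)

variable [Fintype V]

theorem aim_delV_triple_add_one_le (hG : G.IsAcyclic) (hxw : G.Adj x w)
    (hx : ∀ z, G.Adj x z → z = w) (hw : ∀ z, G.Adj w z → z ≠ u → ∀ y, G.Adj z y → y = w)
    (hk : 1 ≤ k) : aim (delV G {x, w, u}) k + 1 ≤ aim G k := by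
  obtain ⟨M, hM, hMc⟩ := exists_card_eq_aim (delV G {x, w, u}) hk
  obtain ⟨hMG, hs⟩ := (isAdmissibleMatching_delV_iff hG).1 hM
  have hgap : ∀ f ∈ M, IsGap G s(x, w) f := fun f hf =>
    isGap_of_forall_adj_eq hx hw (hMG.1.1 f hf) (fun h => hs f hf x h (by simp))
      (fun h => hs f hf w h (by simp)) (fun h => hs f hf u h (by simp))
  rw [← hMc, ← card_insert_of_notMem fun h => (hgap _ h).ne rfl]
  exact (hMG.insert_of_isGap hG hxw hgap).card_le_aim

theorem aim_delV_pair_add_one_le (hG : G.IsAcyclic) (hxw : G.Adj x w)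
    (hx : ∀ z, G.Adj x z → z = w) (hw : ∀ z, G.Adj w z → z ≠ u → ∀ y, G.Adj z y → y = w)
    (hk : 2 ≤ k) : aim (delV G {x, w}) (k - 1) + 1 ≤ aim G k := by
  obtain ⟨M, hM, hMc⟩ := exists_card_eq_aim (delV G {x, w}) (by omega : 1 ≤ k - 1)
  obtain ⟨hMG, hs⟩ := (isAdmissibleMatching_delV_iff hG).1 hM
  have hxf : ∀ f ∈ M, x ∉ f := fun f hf h => hs f hf x h (by simp)
  have hwf : ∀ f ∈ M, w ∉ f := fun f hf h => hs f hf w h (by simp)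
  have hgap : ∀ f ∈ M, u ∉ f → IsGap G s(x, w) f := fun f hf =>
    isGap_of_forall_adj_eq hx hw (hMG.1.1 f hf) (hxf f hf) (hwf f hf)
  suffices IsAdmissibleMatching G k (insert s(x, w) M) by
    rw [← hMc, ← card_insert_of_notMem fun h => hxf _ h (Sym2.mem_mk_left x w)]
    exact this.card_le_aim
  by_cases hu : ∃ f₀ ∈ M, u ∈ f₀
  · obtain ⟨f₀, hf₀, huf₀⟩ := hu
    have hdisj : ∀ f ∈ M, ∀ v ∈ s(x, w), v ∉ f := fun f hf v hv => by
      rcases Sym2.mem_iff.1 hv with rfl | rfl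
      exacts [hxf f hf, hwf f hf]
    have := hMG.insert_of_isGap_of_ne hG hxw hf₀ hdisj fun f hf hff₀ =>
      hgap f hf fun huf => hMG.1.2 f hf f₀ hf₀ hff₀ u huf huf₀
    rwa [Nat.sub_add_cancel (by omega)] at this
  · push Not at hu
    exact (hMG.insert_of_isGap hG hxw fun f hf => hgap f hf (hu f hf)).mono (Nat.sub_le k 1)

theorem aim_le_of_forall_adj_eq (hG : G.IsAcyclic) (hwu : G.Adj w u)
    (hx : ∀ z, G.Adj x z → z = w) (hk : 1 ≤ k) :
    aim G k ≤ aim (delV G {x}) k ∨ (2 ≤ k ∧ aim G k ≤ aim (delV G {x, w}) (k - 1) + 1) ∨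
      aim G k ≤ aim (delV G {x, w, u}) k + 1 := by
  obtain ⟨M, hM, hMc⟩ := exists_card_eq_aim G hk
  rw [← hMc]
  by_cases he : s(x, w) ∈ M
  swap
  · refine Or.inl
      ((isAdmissibleMatching_delV_iff hG).2 ⟨hM, fun f hf v hv hvx => he ?_⟩).card_le_aim
    rw [Set.mem_singleton_iff.1 hvx] at hv
    rwa [← eq_of_mem_edgeSet_of_forall_adj_eq hx (hM.1.1 f hf) hv]
  have hcard := card_erase_add_one he
  have hfree : ∀ f ∈ M.erase s(x, w), x ∉ f ∧ w ∉ f := fun f hf =>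
    have hne := hM.1.2 f (mem_of_mem_erase hf) _ he (ne_of_mem_erase hf)
    ⟨fun h => hne x h (Sym2.mem_mk_left x w), fun h => hne w h (Sym2.mem_mk_right x w)⟩
  rcases hM.erase hG he with ⟨hM', hgap⟩ | ⟨hk2, hM'⟩
  · have hs : ∀ f ∈ M.erase s(x, w), ∀ v ∈ f, v ∉ ({x, w, u} : Set V) := by
      rintro f hf v hv (rfl | rfl | rfl)
      · exact (hfree f hf).1 hv
      · exact (hfree f hf).2 hv
      · exact (hgap f (mem_of_mem_erase hf) (ne_of_mem_erase hf)).2 w v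
          (Sym2.mem_mk_right x w) hv hwu
    have := ((isAdmissibleMatching_delV_iff hG).2 ⟨hM', hs⟩).card_le_aim
    omega
  · have hs : ∀ f ∈ M.erase s(x, w), ∀ v ∈ f, v ∉ ({x, w} : Set V) := by
      rintro f hf v hv (rfl | rfl)
      exacts [(hfree f hf).1 hv, (hfree f hf).2 hv]
    have := ((isAdmissibleMatching_delV_iff hG).2 ⟨hM', hs⟩).card_le_aim
    omega

end DistantLeaf

end

theorem stmt_8_general {n : ℕ} (G : SimpleGraph (Fin n))
    [DecidableRel G.Adj] (hforest : G.IsAcyclic)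
    (vn : Fin n) (vw : Fin n) (vu : Fin n)
    (hadj : G.Adj vw vn) (hleaf : G.degree vn = 1)
    (T : Finset (Fin n)) (hT : ∀ i ∈ T, G.degree i = 1)
    (hnbr : G.neighborFinset vw = insert vu (insert vn T))
    (k : ℕ) (h1 : 1 ≤ k) :
    aim G k =
      if k = 1 then
        max (aim (delV G {vn}) k) (aim (delV G {vn, vw, vu}) k + 1)
      else
        max (aim (delV G {vn}) k)
          (max (aim (delV G {vn, vw}) (k - 1) + 1)
            (aim (delV G {vn, vw, vu}) k + 1)) := by
  have hnbr' : ∀ z, G.Adj vw z ↔ z = vu ∨ z = vn ∨ z ∈ T := fun z => by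
    rw [← SimpleGraph.mem_neighborFinset, hnbr]; simp
  have hleaf' : ∀ z, G.degree z = 1 → ∀ y y', G.Adj z y → G.Adj z y' → y = y' := fun z hz y y' =>
    (SimpleGraph.degree_eq_one_iff_existsUnique_adj.1 hz).unique
  have hx : ∀ z, G.Adj vn z → z = vw := fun z hz => hleaf' vn hleaf z vw hz hadj.symm
  have hw : ∀ z, G.Adj vw z → z ≠ vu → ∀ y, G.Adj z y → y = vw := fun z hz hzu y hy => by
    rcases (hnbr' z).1 hz with rfl | rfl | hzT
    · exact absurd rfl hzu
    · exact hx y hy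
    · exact hleaf' z (hT z hzT) y vw hy hz.symm
  have h₁ := aim_delV_le hforest {vn} k
  have h₂ : 2 ≤ k → aim (delV G {vn, vw}) (k - 1) + 1 ≤ aim G k :=
    aim_delV_pair_add_one_le hforest hadj.symm hx hw
  have h₃ := aim_delV_triple_add_one_le hforest hadj.symm hx hw h1
  have hle := aim_le_of_forall_adj_eq hforest ((hnbr' vu).2 (Or.inl rfl)) hx h1
  split_ifs with hk <;> omega

/-- Recursion for the `k`-admissible matching number of a forest with a distant leaf
(vertex `n-1` of `Fin n`, with neighbor `n-2`, whose other neighbors are the leaves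
in `T` together with `n-3`): for `1 ≤ k ≤ ν(G)`,
`aim(G,k) = max { aim(G₁,k), aim(G₂,k-1)+1, aim(G₃,k)+1 }`, where `G₁, G₂, G₃` are
the induced subgraphs obtained by deleting the last one, two, three vertices
respectively, and the middle term is omitted when `k = 1`. -/
theorem stmt_8 {n : ℕ} (hn : 3 ≤ n) (G : SimpleGraph (Fin n))
    [DecidableRel G.Adj] (hforest : G.IsAcyclic)
    (hnu : 3 ≤ matchingNumber G)
    (vn : Fin n) (vw : Fin n) (vu : Fin n)
    (hvn : (vn : ℕ) = n - 1) (hvw : (vw : ℕ) = n - 2) (hvu : (vu : ℕ) = n - 3)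
    (hadj : G.Adj vw vn) (hleaf : G.degree vn = 1)
    (T : Finset (Fin n)) (hT : ∀ i ∈ T, G.degree i = 1)
    (hvnT : vn ∉ T) (hvuT : vu ∉ T)
    (hnbr : G.neighborFinset vw = insert vu (insert vn T))
    (hdegu : 1 ≤ G.degree vu)
    (k : ℕ) (h1 : 1 ≤ k) (h2 : k ≤ matchingNumber G) :
    aim G k =
      if k = 1 then
        max (aim (delV G {vn}) k) (aim (delV G {vn, vw, vu}) k + 1)
      else
        max (aim (delV G {vn}) k)
          (max (aim (delV G {vn, vw}) (k - 1) + 1)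
            (aim (delV G {vn, vw, vu}) k + 1)) :=
  stmt_8_general G hforest vn vw vu hadj hleaf T hT hnbr k h1

end
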